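/- arXiv:2409.18141 — 2 statements merged into one kernel-verified Lean document; each statement's English description precedes it below -/
import Mathlib

section
/- Let k : (0,∞) → ℝ be nonnegative and locally integrable, and let λ > 0. Suppose s : [0,∞) → ℝ is continuous, nonnegative and nonincreasing, and satisfies the scalar resolvent equation s(t) + λ ∫₀ᵗ k(t−τ) s(τ) dτ = 1 for every t ≥ 0. Then for every t ≥ 0 one has s(t) ≤ 1 / (1 + λ ∫₀ᵗ k(τ) dτ). -/
open MeasureTheory Set

/-! Substituting `u = t - τ` writes the memory term as `∫₀ᵗ k(u) s(t - u) du`. Since `s` is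
nonincreasing, `s(t - u) ≥ s(t)`, so the memory term is at least `s(t) ∫₀ᵗ k`, and the resolvent
equation gives `s(t) (1 + λ ∫₀ᵗ k) ≤ 1`. -/

theorem integral_mul_le_integral_mul_comp_sub {k g : ℝ → ℝ} {t : ℝ} (ht : 0 ≤ t)
    (hk_nonneg : ∀ x ∈ Ioc 0 t, 0 ≤ k x) (hk : IntegrableOn k (Ioc 0 t))
    (hg : AntitoneOn g (Icc 0 t)) :
    (∫ τ in (0:ℝ)..t, k τ) * g t ≤ ∫ τ in (0:ℝ)..t, k (t - τ) * g τ := by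
  have hg_rev : MonotoneOn (fun u => g (t - u)) (Icc 0 t) := fun u hu v hv huv =>
    hg ⟨by linarith [hv.2], by linarith [hv.1]⟩ ⟨by linarith [hu.2], by linarith [hu.1]⟩
      (by linarith)
  have hint : IntegrableOn (fun u => k u * g (t - u)) (Ioc 0 t) :=
    hk.mul_of_top_left <| (hg_rev.memLp_isCompact isCompact_Icc).mono_measure <|
      Measure.restrict_mono Ioc_subset_Icc_self le_rfl
  have hsubst : ∫ τ in (0:ℝ)..t, k (t - τ) * g τ = ∫ u in (0:ℝ)..t, k u * g (t - u) := by
    simpa using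
      intervalIntegral.integral_comp_sub_left (a := 0) (b := t) (fun u => k u * g (t - u)) t
  rw [hsubst, ← intervalIntegral.integral_mul_const, intervalIntegral.integral_of_le ht,
    intervalIntegral.integral_of_le ht]
  refine setIntegral_mono_on (hk.mul_const _) hint measurableSet_Ioc fun u hu => ?_
  exact mul_le_mul_of_nonneg_left
    (hg ⟨by linarith [hu.2], by linarith [hu.1]⟩ ⟨ht, le_rfl⟩ (by linarith [hu.1]))
    (hk_nonneg u hu)

theorem stmt0_general (k s : ℝ → ℝ) (lam : ℝ) (hlam : 0 < lam)
    (hk_nonneg : ∀ x ∈ Ioi (0:ℝ), 0 ≤ k x)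
    (hk_loc : ∀ t > (0:ℝ), IntegrableOn k (Ioc 0 t) volume)
    (hs_mono : AntitoneOn s (Ici 0))
    (hres : ∀ t ∈ Ici (0:ℝ), s t + lam * ∫ τ in (0:ℝ)..t, k (t - τ) * s τ = 1) :
    ∀ t ∈ Ici (0:ℝ), s t ≤ 1 / (1 + lam * ∫ τ in (0:ℝ)..t, k τ) := by
  intro t ht
  have hk_nonneg' : ∀ x ∈ Ioc 0 t, 0 ≤ k x := fun x hx => hk_nonneg x hx.1
  have hk : IntegrableOn k (Ioc 0 t) := by
    rcases (mem_Ici.mp ht).eq_or_lt with rfl | htpos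
    · simp
    · exact hk_loc t htpos
  have hK_nonneg : 0 ≤ ∫ τ in (0:ℝ)..t, k τ := by
    rw [intervalIntegral.integral_of_le ht]
    exact setIntegral_nonneg measurableSet_Ioc hk_nonneg'
  have hmemory := integral_mul_le_integral_mul_comp_sub ht hk_nonneg' hk
    (hs_mono.mono Icc_subset_Ici_self)
  rw [le_div_iff₀ (by positivity)]
  linear_combination hres t ht + lam * hmemory

/-- Scalar resolvent bound: if `s` is a continuous nonnegative nonincreasing solution of the
one-dimensional resolvent equation `s(t) + λ ∫₀ᵗ k(t-τ) s(τ) dτ = 1` with nonnegative locally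
integrable kernel `k` and `λ > 0`, then `s(t) ≤ 1 / (1 + λ ∫₀ᵗ k(τ) dτ)` for all `t ≥ 0`. -/
theorem stmt0 (k s : ℝ → ℝ) (lam : ℝ) (hlam : 0 < lam)
    (hk_nonneg : ∀ x ∈ Ioi (0:ℝ), 0 ≤ k x)
    (hk_loc : ∀ t > (0:ℝ), IntegrableOn k (Ioc 0 t) volume)
    (hs_cont : ContinuousOn s (Ici 0))
    (hs_nonneg : ∀ t ∈ Ici (0:ℝ), 0 ≤ s t)
    (hs_mono : AntitoneOn s (Ici 0))
    (hres : ∀ t ∈ Ici (0:ℝ), s t + lam * ∫ τ in (0:ℝ)..t, k (t - τ) * s τ = 1) :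
    ∀ t ∈ Ici (0:ℝ), s t ≤ 1 / (1 + lam * ∫ τ in (0:ℝ)..t, k τ) :=
  stmt0_general k s lam hlam hk_nonneg hk_loc hs_mono hres
end

section
/- Let k and 𝒦 be nonnegative locally integrable functions on (0,∞) satisfying the Sonine condition ∫₀ᵗ 𝒦(t−s) k(s) ds = 1 for all t > 0. Let λ ∈ ℝ and let w : [0,∞) → ℝ be continuously differentiable and satisfy ∫₀ᵗ k(t−s) w′(s) ds + λ w(t) = 0 for all t > 0. Then for all t > 0, w(t) − w(0) + λ ∫₀ᵗ 𝒦(t−s) w(s) ds = 0. -/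
open MeasureTheory Set

-- reflection of an a.e. equality on (0,∞) to s ↦ (t-s) on (0,t]
private lemma refl_ae {f g : ℝ → ℝ} (h : f =ᵐ[volume.restrict (Ioi (0:ℝ))] g)
    {t : ℝ} (ht : 0 < t) :
    (fun s => f (t - s)) =ᵐ[volume.restrict (Ioc (0:ℝ) t)] (fun s => g (t - s)) := by
  have h' : ∀ᵐ x ∂(volume : Measure ℝ), x ∈ Ioi (0:ℝ) → f x = g x :=
    (ae_restrict_iff' measurableSet_Ioi).mp h
  have h2 : ∀ᵐ s ∂(volume : Measure ℝ), t - s ∈ Ioi (0:ℝ) → f (t - s) = g (t - s) :=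
    (Measure.measurePreserving_sub_left volume t).quasiMeasurePreserving.ae h'
  have h3 : ∀ᵐ s ∂(volume.restrict (Ioc (0:ℝ) t)), s ≠ t := by
    rw [ae_iff]
    have hset : {s : ℝ | ¬ s ≠ t} = {t} := by ext x; simp
    rw [hset, Measure.restrict_apply (measurableSet_singleton t)]
    exact measure_mono_null inter_subset_left (measure_singleton t)
  filter_upwards [ae_restrict_of_ae h2, ae_restrict_mem measurableSet_Ioc, h3] with s hs hmem hne
  exact hs (by simp only [mem_Ioi, sub_pos]; exact lt_of_le_of_ne hmem.2 hne)

private lemma refl_int {h : ℝ → ℝ} {s : ℝ} (hs : 0 < s)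
    (hint : IntegrableOn h (Ioc 0 s) volume) :
    IntegrableOn (fun u => h (s - u)) (Ioc 0 s) volume := by
  have h1 : IntervalIntegrable h volume 0 s :=
    (intervalIntegrable_iff_integrableOn_Ioc_of_le hs.le).mpr hint
  have h2 := h1.comp_sub_left s
  rw [sub_zero, sub_self] at h2
  exact (intervalIntegrable_iff_integrableOn_Ioc_of_le hs.le).mp h2.symm

private lemma sonine_core (k 𝒦 : ℝ → ℝ) (lam : ℝ) (w w' : ℝ → ℝ)
    (hkm : Measurable k) (h𝒦m : Measurable 𝒦)
    (hk0 : ∀ x, 0 ≤ k x) (h𝒦0 : ∀ x, 0 ≤ 𝒦 x)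
    (hk_loc : ∀ t > (0:ℝ), IntegrableOn k (Ioc 0 t) volume)
    (h𝒦_loc : ∀ t > (0:ℝ), IntegrableOn 𝒦 (Ioc 0 t) volume)
    (hSonine : ∀ t > (0:ℝ), (∫ s in (0:ℝ)..t, 𝒦 (t - s) * k s) = 1)
    (hderiv : ∀ t ∈ Ici (0:ℝ), HasDerivWithinAt w (w' t) (Ici 0) t)
    (hw'cont : Continuous w')
    (heq : ∀ t > (0:ℝ), (∫ s in (0:ℝ)..t, k (t - s) * w' s) + lam * w t = 0) :
    ∀ t > (0:ℝ), w t - w 0 + lam * ∫ s in (0:ℝ)..t, 𝒦 (t - s) * w s = 0 := by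
  intro t ht
  set ν : Measure ℝ := volume.restrict (Ioc (0:ℝ) t) with hν
  obtain ⟨C, hC⟩ := isCompact_Icc.exists_bound_of_continuousOn
    (s := Icc (0:ℝ) t) hw'cont.continuousOn
  set C' : ℝ := max C 0 with hC'
  have hC'0 : 0 ≤ C' := le_max_right _ _
  have hCb : ∀ u ∈ Icc (0:ℝ) t, ‖w' u‖ ≤ C' := fun u hu => (hC u hu).trans (le_max_left _ _)
  set K : ℝ := ∫ u in Ioc (0:ℝ) t, k u with hK
  have hK0 : 0 ≤ K := setIntegral_nonneg measurableSet_Ioc fun u _ => hk0 u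
  -- FTC
  have hFTC : ∫ u in (0:ℝ)..t, w' u = w t - w 0 := by
    apply intervalIntegral.integral_eq_sub_of_hasDeriv_right_of_le ht.le
    · intro x hx
      exact ((hderiv x hx.1).continuousWithinAt).mono (Icc_subset_Ici_self)
    · intro x hx
      exact (hderiv x hx.1.le).mono (fun y hy => le_trans hx.1.le (le_of_lt hy))
    · exact hw'cont.intervalIntegrable 0 t
  set g : ℝ → ℝ := fun s => ∫ u in Ioc (0:ℝ) s, k (s - u) * w' u with hg
  set f : ℝ → ℝ → ℝ :=
    fun s u => indicator (Ioc 0 s) (fun u => 𝒦 (t - s) * (k (s - u) * w' u)) u with hf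
  have hres : ∀ s : ℝ, s ≤ t → ν.restrict (Ioc 0 s) = volume.restrict (Ioc 0 s) := by
    intro s hs
    rw [hν, Measure.restrict_restrict measurableSet_Ioc,
      inter_eq_left.mpr (Ioc_subset_Ioc_right hs)]
  -- measurability of the kernel of the double integral
  have hmeas : Measurable (Function.uncurry f) := by
    have hset : MeasurableSet {p : ℝ × ℝ | 0 < p.2 ∧ p.2 ≤ p.1} :=
      (measurableSet_lt measurable_const measurable_snd).inter
        (measurableSet_le measurable_snd measurable_fst)
    have hcore : Measurable (fun p : ℝ × ℝ => 𝒦 (t - p.1) * (k (p.1 - p.2) * w' p.2)) :=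
      ((h𝒦m.comp (measurable_const.sub measurable_fst)).mul
        ((hkm.comp (measurable_fst.sub measurable_snd)).mul
          (hw'cont.measurable.comp measurable_snd)))
    have : Function.uncurry f =
        indicator {p : ℝ × ℝ | 0 < p.2 ∧ p.2 ≤ p.1}
          (fun p => 𝒦 (t - p.1) * (k (p.1 - p.2) * w' p.2)) := by
      funext p
      rcases p with ⟨s, u⟩
      simp [Function.uncurry, hf, Set.indicator_apply, mem_Ioc, Set.mem_setOf_eq]
    rw [this]
    exact hcore.indicator hset
  -- integrability of sections
  have hsec : ∀ s ∈ Ioc (0:ℝ) t, Integrable (f s) ν := by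
    intro s hs
    have : Integrable (fun u => 𝒦 (t - s) * (k (s - u) * w' u))
        (volume.restrict (Ioc 0 s)) := by
      apply Integrable.const_mul
      have hrw : (fun u => k (s - u) * w' u) = fun u => w' u * k (s - u) :=
        funext fun u => mul_comm _ _
      rw [hrw]
      apply Integrable.bdd_mul (c := C') (refl_int hs.1 (hk_loc s hs.1))
        (hw'cont.aestronglyMeasurable.restrict)
      filter_upwards [ae_restrict_mem measurableSet_Ioc] with u hu
      exact hCb u ⟨hu.1.le, hu.2.trans hs.2⟩
    rw [hf]
    simp only []
    rw [integrable_indicator_iff measurableSet_Ioc]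
    unfold IntegrableOn
    rw [hres s hs.2]
    exact this
  -- integrability of the norm integrals
  have h𝒦refl : Integrable (fun s => 𝒦 (t - s)) ν := refl_int ht (h𝒦_loc t ht)
  have hnorm_eq : ∀ s ∈ Ioc (0:ℝ) t,
      (∫ u, ‖f s u‖ ∂ν) = ∫ u in Ioc (0:ℝ) s, ‖𝒦 (t - s) * (k (s - u) * w' u)‖ := by
    intro s hs
    have : (fun u => ‖f s u‖) =
        indicator (Ioc 0 s) (fun u => ‖𝒦 (t - s) * (k (s - u) * w' u)‖) := by
      funext u
      rw [hf]
      simp only []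
      rw [norm_indicator_eq_indicator_norm]
    rw [this, integral_indicator measurableSet_Ioc, hres s hs.2]
  have hupper_int : ∀ s, 0 < s → s ≤ t →
      Integrable (fun u => 𝒦 (t - s) * (k (s - u) * C')) (volume.restrict (Ioc 0 s)) := by
    intro s hs0 hst
    exact ((refl_int hs0 (hk_loc s hs0)).mul_const C').const_mul _
  have hnorm_int_sec : ∀ s ∈ Ioc (0:ℝ) t,
      Integrable (fun u => ‖𝒦 (t - s) * (k (s - u) * w' u)‖) (volume.restrict (Ioc 0 s)) := by
    intro s hs
    have h1 := hsec s hs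
    rw [hf] at h1
    simp only [] at h1
    rw [integrable_indicator_iff measurableSet_Ioc] at h1
    unfold IntegrableOn at h1
    rw [hres s hs.2] at h1
    exact h1.norm
  have hnorm : Integrable (fun s => ∫ u, ‖f s u‖ ∂ν) ν := by
    apply Integrable.mono' ((h𝒦refl.mul_const (C' * K)))
    · exact (hmeas.norm.aestronglyMeasurable).integral_prod_right'
    · filter_upwards [ae_restrict_mem measurableSet_Ioc] with s hs
      rw [Real.norm_eq_abs, abs_of_nonneg (integral_nonneg fun u => norm_nonneg _)]
      rw [hnorm_eq s hs]
      have step1 : (∫ u in Ioc (0:ℝ) s, ‖𝒦 (t - s) * (k (s - u) * w' u)‖) ≤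
          ∫ u in Ioc (0:ℝ) s, 𝒦 (t - s) * (k (s - u) * C') := by
        apply integral_mono_ae (hnorm_int_sec s hs) (hupper_int s hs.1 hs.2)
        filter_upwards [ae_restrict_mem measurableSet_Ioc] with u hu
        have h1 : ‖𝒦 (t - s) * (k (s - u) * w' u)‖ =
            𝒦 (t - s) * (k (s - u) * ‖w' u‖) := by
          rw [norm_mul, norm_mul, Real.norm_of_nonneg (h𝒦0 _), Real.norm_of_nonneg (hk0 _)]
        rw [h1]
        have h2 : ‖w' u‖ ≤ C' := hCb u ⟨hu.1.le, hu.2.trans hs.2⟩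
        exact mul_le_mul_of_nonneg_left
          (mul_le_mul_of_nonneg_left h2 (hk0 _)) (h𝒦0 _)
      have step2 : (∫ u in Ioc (0:ℝ) s, 𝒦 (t - s) * (k (s - u) * C')) =
          𝒦 (t - s) * C' * ∫ u in Ioc (0:ℝ) s, k (s - u) := by
        rw [integral_const_mul]
        rw [show (fun u => k (s - u) * C') = fun u => C' * k (s - u) from
          funext fun u => mul_comm _ _]
        rw [integral_const_mul]
        ring
      have step3 : (∫ u in Ioc (0:ℝ) s, k (s - u)) = ∫ u in Ioc (0:ℝ) s, k u := by
        rw [← intervalIntegral.integral_of_le hs.1.le, ← intervalIntegral.integral_of_le hs.1.le]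
        rw [intervalIntegral.integral_comp_sub_left k s]
        rw [sub_zero, sub_self]
      have step4 : (∫ u in Ioc (0:ℝ) s, k u) ≤ K := by
        rw [hK]
        apply setIntegral_mono_set (hk_loc t ht)
        · filter_upwards with u using hk0 u
        · exact HasSubset.Subset.eventuallyLE (Ioc_subset_Ioc_right hs.2)
      calc (∫ u in Ioc (0:ℝ) s, ‖𝒦 (t - s) * (k (s - u) * w' u)‖)
          ≤ 𝒦 (t - s) * C' * ∫ u in Ioc (0:ℝ) s, k u := by rw [← step3, ← step2]; exact step1
        _ ≤ 𝒦 (t - s) * C' * K := by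
            apply mul_le_mul_of_nonneg_left step4 (mul_nonneg (h𝒦0 _) hC'0)
        _ = 𝒦 (t - s) * (C' * K) := by ring
  have hInt : Integrable (Function.uncurry f) (ν.prod ν) := by
    rw [integrable_prod_iff hmeas.aestronglyMeasurable]
    constructor
    · filter_upwards [ae_restrict_mem measurableSet_Ioc] with s hs using hsec s hs
    · exact hnorm
  -- evaluate the double integral two ways
  have hg_eval : ∀ s ∈ Ioc (0:ℝ) t, (∫ u, f s u ∂ν) = 𝒦 (t - s) * g s := by
    intro s hs
    rw [hf]
    simp only []
    rw [integral_indicator measurableSet_Ioc, hres s hs.2, integral_const_mul]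
  have hswap := integral_integral_swap hInt
  have hL : (∫ s, (∫ u, f s u ∂ν) ∂ν) = ∫ s in Ioc (0:ℝ) t, 𝒦 (t - s) * g s := by
    apply integral_congr_ae
    filter_upwards [ae_restrict_mem measurableSet_Ioc] with s hs using hg_eval s hs
  have hne : ∀ᵐ u ∂ν, u ≠ t := by
    rw [ae_iff]
    have hset : {u : ℝ | ¬ u ≠ t} = {t} := by ext x; simp
    rw [hset, hν, Measure.restrict_apply (measurableSet_singleton t)]
    exact measure_mono_null inter_subset_left (measure_singleton t)
  have hR : (∫ u, (∫ s, f s u ∂ν) ∂ν) = ∫ u in Ioc (0:ℝ) t, w' u := by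
    apply integral_congr_ae
    filter_upwards [ae_restrict_mem measurableSet_Ioc, hne] with u hu hune
    have hu0 : 0 < u := hu.1
    have hut : u < t := lt_of_le_of_ne hu.2 hune
    have h1 : (fun s => f s u) =
        indicator (Ici u) (fun s => 𝒦 (t - s) * (k (s - u) * w' u)) := by
      funext s
      rw [hf]
      simp only []
      rw [Set.indicator_apply, Set.indicator_apply]
      congr 1
      simp [mem_Ioc, mem_Ici, hu0]
    rw [h1, integral_indicator measurableSet_Ici]
    have h2 : ν.restrict (Ici u) = volume.restrict (Icc u t) := by
      rw [hν, Measure.restrict_restrict measurableSet_Ici]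
      congr 1
      ext x
      simp only [mem_inter_iff, mem_Ici, mem_Ioc, mem_Icc]
      constructor
      · rintro ⟨ha, _, hc⟩; exact ⟨ha, hc⟩
      · rintro ⟨ha, hb⟩; exact ⟨ha, lt_of_lt_of_le hu0 ha, hb⟩
    rw [h2, integral_Icc_eq_integral_Ioc, ← intervalIntegral.integral_of_le hut.le]
    have h3 : (fun s => 𝒦 (t - s) * (k (s - u) * w' u)) =
        fun s => w' u * (𝒦 (t - s) * k (s - u)) := funext fun s => by ring
    rw [h3, intervalIntegral.integral_const_mul]
    have h4 : (∫ s in u..t, 𝒦 (t - s) * k (s - u)) =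
        ∫ v in (0:ℝ)..(t - u), 𝒦 ((t - u) - v) * k v := by
      have h := intervalIntegral.integral_comp_add_right (a := 0) (b := t - u)
        (fun s => 𝒦 (t - s) * k (s - u)) u
      rw [zero_add, sub_add_cancel] at h
      rw [← h]
      apply intervalIntegral.integral_congr
      intro x _
      have e1 : t - (x + u) = t - u - x := by ring
      have e2 : x + u - u = x := by ring
      show 𝒦 (t - (x + u)) * k (x + u - u) = 𝒦 (t - u - x) * k x
      rw [e1, e2]
    rw [h4, hSonine (t - u) (by linarith), mul_one]
  have key1 : (∫ s in Ioc (0:ℝ) t, 𝒦 (t - s) * g s) = w t - w 0 := by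
    rw [← hL, hswap, hR, ← intervalIntegral.integral_of_le ht.le, hFTC]
  have key2 : (∫ s in Ioc (0:ℝ) t, 𝒦 (t - s) * g s) =
      (-lam) * ∫ s in Ioc (0:ℝ) t, 𝒦 (t - s) * w s := by
    rw [← integral_const_mul]
    apply setIntegral_congr_fun measurableSet_Ioc
    intro s hs
    have hgs : g s = -(lam * w s) := by
      have h5 := heq s hs.1
      rw [hg]
      simp only []
      rw [← intervalIntegral.integral_of_le hs.1.le]
      linarith
    show 𝒦 (t - s) * g s = -lam * (𝒦 (t - s) * w s)
    rw [hgs]; ring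
  rw [intervalIntegral.integral_of_le ht.le]
  rw [key2] at key1
  rw [neg_mul] at key1
  linarith

/-- Reduction of the evolutionary differential equation to the integral equation via the Sonine
partner: if `(k, 𝒦)` are nonnegative locally integrable kernels with `∫₀ᵗ 𝒦(t-s) k(s) ds = 1`
for all `t > 0`, and `w` is continuously differentiable on `[0,∞)` with
`∫₀ᵗ k(t-s) w'(s) ds + λ w(t) = 0` for all `t > 0`, then
`w(t) - w(0) + λ ∫₀ᵗ 𝒦(t-s) w(s) ds = 0` for all `t > 0`. -/
theorem stmt17 (k 𝒦 : ℝ → ℝ) (lam : ℝ) (w w' : ℝ → ℝ)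
    (hk_nonneg : ∀ x ∈ Ioi (0:ℝ), 0 ≤ k x)
    (h𝒦_nonneg : ∀ x ∈ Ioi (0:ℝ), 0 ≤ 𝒦 x)
    (hk_loc : ∀ t > (0:ℝ), IntegrableOn k (Ioc 0 t) volume)
    (h𝒦_loc : ∀ t > (0:ℝ), IntegrableOn 𝒦 (Ioc 0 t) volume)
    (hSonine : ∀ t > (0:ℝ), (∫ s in (0:ℝ)..t, 𝒦 (t - s) * k s) = 1)
    (hderiv : ∀ t ∈ Ici (0:ℝ), HasDerivWithinAt w (w' t) (Ici 0) t)
    (hw'cont : ContinuousOn w' (Ici 0))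
    (heq : ∀ t > (0:ℝ), (∫ s in (0:ℝ)..t, k (t - s) * w' s) + lam * w t = 0) :
    ∀ t > (0:ℝ), w t - w 0 + lam * ∫ s in (0:ℝ)..t, 𝒦 (t - s) * w s = 0 := by
  -- measurable nonnegative representatives of the kernels
  have hIoi : Ioi (0:ℝ) = ⋃ n : ℕ, Ioc (0:ℝ) (n + 1) := by
    ext x
    simp only [mem_Ioi, mem_iUnion, mem_Ioc]
    constructor
    · intro hx
      obtain ⟨n, hn⟩ := exists_nat_ge x
      exact ⟨n, hx, hn.trans (by linarith)⟩
    · rintro ⟨n, hx, -⟩; exact hx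
  have mk_fun : ∀ h : ℝ → ℝ, (∀ x ∈ Ioi (0:ℝ), 0 ≤ h x) →
      (∀ t > (0:ℝ), IntegrableOn h (Ioc 0 t) volume) →
      ∃ h' : ℝ → ℝ, Measurable h' ∧ (∀ x, 0 ≤ h' x) ∧
        h' =ᵐ[volume.restrict (Ioi (0:ℝ))] h ∧
        (∀ t > (0:ℝ), IntegrableOn h' (Ioc 0 t) volume) := by
    intro h h0 hloc
    have hae : AEStronglyMeasurable h (volume.restrict (Ioi (0:ℝ))) := by
      rw [hIoi, aestronglyMeasurable_iUnion_iff]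
      intro n
      exact (hloc (n + 1) (by positivity)).aestronglyMeasurable
    set h' : ℝ → ℝ := indicator (Ioi 0) (fun y => max (hae.mk h y) 0) with hh'
    have hm : Measurable h' :=
      (hae.stronglyMeasurable_mk.measurable.max measurable_const).indicator measurableSet_Ioi
    have h0' : ∀ x, 0 ≤ h' x := by
      intro x
      rw [hh', Set.indicator_apply]
      split
      · exact le_max_right _ _
      · exact le_refl 0
    have heqae : h' =ᵐ[volume.restrict (Ioi (0:ℝ))] h := by
      filter_upwards [hae.ae_eq_mk, ae_restrict_mem measurableSet_Ioi] with x hx hmem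
      rw [hh', indicator_of_mem hmem, ← hx, max_eq_left (h0 x hmem)]
    refine ⟨h', hm, h0', heqae, fun t ht => (hloc t ht).congr ?_⟩
    exact Filter.EventuallyEq.symm (ae_restrict_of_ae_restrict_of_subset Ioc_subset_Ioi_self heqae)
  obtain ⟨k', hk'm, hk'0, hk'ae, hk'loc⟩ := mk_fun k hk_nonneg hk_loc
  obtain ⟨𝒦', h𝒦'm, h𝒦'0, h𝒦'ae, h𝒦'loc⟩ := mk_fun 𝒦 h𝒦_nonneg h𝒦_loc
  -- continuous extension of w'
  set w'' : ℝ → ℝ := fun u => w' (max u 0) with hw''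
  have hw''cont : Continuous w'' :=
    hw'cont.comp_continuous (continuous_id.max continuous_const)
      (fun x => mem_Ici.mpr (le_max_right _ _))
  have hw''eq : ∀ u, 0 ≤ u → w'' u = w' u := by
    intro u hu
    rw [hw'']
    simp only []
    rw [max_eq_left hu]
  have hderiv'' : ∀ s ∈ Ici (0:ℝ), HasDerivWithinAt w (w'' s) (Ici 0) s := by
    intro s hs
    rw [hw''eq s hs]
    exact hderiv s hs
  have hSonine' : ∀ t > (0:ℝ), (∫ s in (0:ℝ)..t, 𝒦' (t - s) * k' s) = 1 := by
    intro t ht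
    rw [← hSonine t ht, intervalIntegral.integral_of_le ht.le,
      intervalIntegral.integral_of_le ht.le]
    exact integral_congr_ae ((refl_ae h𝒦'ae ht).mul
      (ae_restrict_of_ae_restrict_of_subset Ioc_subset_Ioi_self hk'ae))
  have heq' : ∀ t > (0:ℝ), (∫ s in (0:ℝ)..t, k' (t - s) * w'' s) + lam * w t = 0 := by
    intro t ht
    have hrw : (∫ s in (0:ℝ)..t, k' (t - s) * w'' s) = ∫ s in (0:ℝ)..t, k (t - s) * w' s := by
      rw [intervalIntegral.integral_of_le ht.le, intervalIntegral.integral_of_le ht.le]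
      apply integral_congr_ae
      have hw : w'' =ᵐ[volume.restrict (Ioc (0:ℝ) t)] w' := by
        filter_upwards [ae_restrict_mem measurableSet_Ioc] with s hs using hw''eq s hs.1.le
      exact (refl_ae hk'ae ht).mul hw
    rw [hrw]
    exact heq t ht
  have core := sonine_core k' 𝒦' lam w w'' hk'm h𝒦'm hk'0 h𝒦'0 hk'loc h𝒦'loc
    hSonine' hderiv'' hw''cont heq'
  intro t ht
  have h1 := core t ht
  have h2 : (∫ s in (0:ℝ)..t, 𝒦' (t - s) * w s) = ∫ s in (0:ℝ)..t, 𝒦 (t - s) * w s := by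
    rw [intervalIntegral.integral_of_le ht.le, intervalIntegral.integral_of_le ht.le]
    exact integral_congr_ae ((refl_ae h𝒦'ae ht).mul (Filter.EventuallyEq.refl _ w))
  rw [h2] at h1
  exact h1
end
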